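/- Let ℒ be the Gremban Laplacian of a signed graph G, and let ψ ∈ ℝ^{2n} be any vector with no zero entries. Define 𝒰₁ = {v : ψ(v) > 0} and 𝒰₂ = {v : ψ(v) < 0} in V(𝒢). If ψ is symmetric under the Gremban involution (ψ(η(v)) = ψ(v) for all v), then the cut-set C(𝒰₁, 𝒰₂) is Gremban-symmetric and its projection to G is a cut-set of G; if ψ is antisymmetric (ψ(η(v)) = −ψ(v)), then C(𝒰₁, 𝒰₂) is Gremban-symmetric and its projection to G is a frustration set of G. -/

import Mathlib

/-- A signed graph: a simple graph together with a symmetric `±1`-valued sign function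
on its edges. -/
structure SignedGraph (V : Type*) where
  G : SimpleGraph V
  sign : V → V → ℤ
  sign_symm : ∀ u v, sign u v = sign v u
  sign_pm : ∀ u v, G.Adj u v → sign u v = 1 ∨ sign u v = -1

namespace SignedGraph

variable {V : Type*} (S : SignedGraph V)

/-- The Gremban expansion of a signed graph: each vertex `v` is doubled into the two
polarities `(v, true)` (positive) and `(v, false)` (negative); a positive edge lifts to
two edges between equal polarities, and a negative edge to two edges between opposite
polarities. -/
def gremban : SimpleGraph (V × Bool) where
  Adj x y := S.G.Adj x.1 y.1 ∧ ((x.2 = y.2) ↔ S.sign x.1 y.1 = 1)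
  symm := by
    constructor
    rintro ⟨u, a⟩ ⟨v, b⟩ ⟨h, hs⟩
    refine ⟨h.symm, ?_⟩
    rw [S.sign_symm v u, eq_comm]
    exact hs
  loopless := by
    constructor
    rintro ⟨u, a⟩ ⟨h, _⟩
    exact S.G.loopless.irrefl u h

/-- The Gremban involution, swapping the two polarities of every vertex. -/
def eta : V × Bool → V × Bool := fun x => (x.1, !x.2)

end SignedGraph

open SignedGraph

/-- The set of edges of `G` with one endpoint in `A` and the other in `B`. -/
def cutEdges {V : Type*} (G : SimpleGraph V) (A B : Set V) : Set (Sym2 V) :=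
  {e | e ∈ G.edgeSet ∧ ∃ u v, e = s(u, v) ∧ u ∈ A ∧ v ∈ B}

/-- The edge connectivity of a graph: the minimum size of a cut-set over all
bipartitions of the vertex set into two nonempty parts. -/
noncomputable def edgeConn {V : Type*} (G : SimpleGraph V) : ℕ :=
  sInf {n | ∃ A : Set V, A.Nonempty ∧ Aᶜ.Nonempty ∧ (cutEdges G A Aᶜ).ncard = n}

/-- The frustration set of a switching function `θ`: the edges that are negative after
switching by `θ`. -/
def frustEdges {V : Type*} (S : SignedGraph V) (θ : V → ℤ) : Set (Sym2 V) :=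
  {e | e ∈ S.G.edgeSet ∧ ∃ u v, e = s(u, v) ∧ θ u * θ v * S.sign u v = -1}

/-- The frustration index of a signed graph: the minimum size of a frustration set over
all switching functions `θ : V → {±1}`. -/
noncomputable def frustIndex {V : Type*} (S : SignedGraph V) : ℕ :=
  sInf {n | ∃ θ : V → ℤ, (∀ v, θ v = 1 ∨ θ v = -1) ∧ (frustEdges S θ).ncard = n}

/-!
Precomposition with `η` is an automorphism of the Gremban expansion, so it carries the cut
`C(𝒰₁, 𝒰₂)` to `C(η⁻¹𝒰₁, η⁻¹𝒰₂)`: a symmetric `ψ` fixes both sets, an antisymmetric one swaps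
them. As `ψ` has no zeros, `𝒰₂ = 𝒰₁ᶜ`. For symmetric `ψ`, `𝒰₁` is the full lift of
`A = {v | ψ(v, +) > 0}`, and every edge of `G` lifts from either polarity of an endpoint, so the
projected cut is `C(A, Aᶜ)`. For antisymmetric `ψ`, `(v, a) ∈ 𝒰₁` iff the polarity `a` agrees
with the switching sign `θ v = ±1` recording whether `v ∈ A`; a lifted edge `(u, a)(v, b)` has
`σ(uv) = a·b`, so it crosses the cut exactly when `θ u · θ v · σ(uv) = -1`.
-/

section CutEdges

variable {V W : Type*}

theorem mk_mem_cutEdges_iff {G : SimpleGraph V} {A B : Set V} {u v : V} :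
    s(u, v) ∈ cutEdges G A B ↔ G.Adj u v ∧ (u ∈ A ∧ v ∈ B ∨ v ∈ A ∧ u ∈ B) := by
  simp only [cutEdges, Set.mem_ofPred_eq, SimpleGraph.mem_edgeSet, Sym2.eq_iff]
  constructor
  · rintro ⟨h, x, y, (⟨rfl, rfl⟩ | ⟨rfl, rfl⟩), hx, hy⟩ <;> tauto
  · rintro ⟨h, ⟨hu, hv⟩ | ⟨hv, hu⟩⟩
    exacts [⟨h, u, v, .inl ⟨rfl, rfl⟩, hu, hv⟩, ⟨h, v, u, .inr ⟨rfl, rfl⟩, hv, hu⟩]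

theorem cutEdges_comm (G : SimpleGraph V) (A B : Set V) : cutEdges G A B = cutEdges G B A := by
  ext e
  induction e using Sym2.ind with
  | _ u v => simp only [mk_mem_cutEdges_iff, or_comm, and_comm]

theorem preimage_map_cutEdges (f : V → W) (G : SimpleGraph W) (A B : Set W) :
    Sym2.map f ⁻¹' cutEdges G A B = cutEdges (G.comap f) (f ⁻¹' A) (f ⁻¹' B) := by
  ext e
  induction e using Sym2.ind with
  | _ u v => simp only [Set.mem_preimage, Sym2.map_mk, mk_mem_cutEdges_iff,
      SimpleGraph.comap_adj]

theorem Sym2.mk_mem_image_map_iff {α β : Type*} {f : α → β} {T : Set (Sym2 α)} {u v : β} :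
    s(u, v) ∈ Sym2.map f '' T ↔ ∃ x y, s(x, y) ∈ T ∧ f x = u ∧ f y = v := by
  constructor
  · rintro ⟨e, he, hmap⟩
    induction e using Sym2.ind with
    | _ x y =>
      rw [Sym2.map_mk, Sym2.eq_iff] at hmap
      rcases hmap with ⟨rfl, rfl⟩ | ⟨rfl, rfl⟩
      exacts [⟨x, y, he, rfl, rfl⟩, ⟨y, x, Sym2.eq_swap ▸ he, rfl, rfl⟩]
  · rintro ⟨x, y, h, rfl, rfl⟩
    exact ⟨s(x, y), h, rfl⟩

end CutEdges

theorem mk_mem_frustEdges_iff {V : Type*} {S : SignedGraph V} {θ : V → ℤ} {u v : V} :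
    s(u, v) ∈ frustEdges S θ ↔ S.G.Adj u v ∧ θ u * θ v * S.sign u v = -1 := by
  simp only [frustEdges, Set.mem_ofPred_eq, SimpleGraph.mem_edgeSet, Sym2.eq_iff]
  constructor
  · rintro ⟨h, x, y, (⟨rfl, rfl⟩ | ⟨rfl, rfl⟩), hθ⟩
    · exact ⟨h, hθ⟩
    · rw [S.sign_symm, mul_comm (θ v)] at hθ
      exact ⟨h, hθ⟩
  · rintro ⟨h, hθ⟩
    exact ⟨h, u, v, .inl ⟨rfl, rfl⟩, hθ⟩

namespace SignedGraph

variable {V : Type*} (S : SignedGraph V)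

theorem eta_involutive : Function.Involutive (eta : V × Bool → V × Bool) := fun x => by
  simp [eta]

theorem gremban_comap_eta : S.gremban.comap eta = S.gremban := by
  ext ⟨u, a⟩ ⟨v, b⟩
  cases a <;> cases b <;> simp [gremban, eta]

theorem image_map_eta_cutEdges (A B : Set (V × Bool)) :
    Sym2.map eta '' cutEdges S.gremban A B = cutEdges S.gremban (eta ⁻¹' A) (eta ⁻¹' B) := by
  have hinv : Function.Involutive (Sym2.map (eta : V × Bool → V × Bool)) := fun e => by
    rw [Sym2.map_map, eta_involutive.comp_self, Sym2.map_id, id]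
  rw [hinv.image_eq_preimage_symm, preimage_map_cutEdges, gremban_comap_eta]

theorem mk_mem_image_fst_cutEdges_iff {A B : Set (V × Bool)} {u v : V} :
    s(u, v) ∈ Sym2.map Prod.fst '' cutEdges S.gremban A B ↔
      ∃ a b, S.gremban.Adj (u, a) (v, b) ∧
        ((u, a) ∈ A ∧ (v, b) ∈ B ∨ (v, b) ∈ A ∧ (u, a) ∈ B) := by
  simp only [Sym2.mk_mem_image_map_iff, mk_mem_cutEdges_iff, Prod.exists]
  constructor
  · rintro ⟨u, a, v, b, h, rfl, rfl⟩
    exact ⟨a, b, h⟩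
  · rintro ⟨a, b, h⟩
    exact ⟨u, a, v, b, h, rfl, rfl⟩

theorem exists_gremban_adj {u v : V} (h : S.G.Adj u v) (a : Bool) :
    ∃ b, S.gremban.Adj (u, a) (v, b) :=
  ⟨if S.sign u v = 1 then a else !a, h, by split_ifs <;> simp_all⟩

theorem image_fst_cutEdges_preimage (A B : Set V) :
    Sym2.map Prod.fst '' cutEdges S.gremban (Prod.fst ⁻¹' A) (Prod.fst ⁻¹' B) =
      cutEdges S.G A B := by
  ext e
  induction e using Sym2.ind with
  | _ u v =>
    simp only [mk_mem_image_fst_cutEdges_iff, mk_mem_cutEdges_iff, Set.mem_preimage]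
    constructor
    · rintro ⟨a, b, h, hcut⟩
      exact ⟨h.1, hcut⟩
    · rintro ⟨h, hcut⟩
      obtain ⟨b, hb⟩ := S.exists_gremban_adj h true
      exact ⟨true, b, hb, hcut⟩

theorem image_fst_cutEdges_switching (A : Set V) [DecidablePred (· ∈ A)] :
    Sym2.map Prod.fst '' cutEdges S.gremban {x | x.2 = true ↔ x.1 ∈ A}
        {x | x.2 = true ↔ x.1 ∈ A}ᶜ =
      frustEdges S (fun u => if u ∈ A then 1 else -1) := by
  ext e
  induction e using Sym2.ind with
  | _ u v =>
    simp only [mk_mem_image_fst_cutEdges_iff, mk_mem_frustEdges_iff]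
    constructor
    · rintro ⟨a, b, ⟨h, hab⟩, hcut⟩
      refine ⟨h, ?_⟩
      rcases S.sign_pm u v h with hs | hs <;> by_cases hu : u ∈ A <;> by_cases hv : v ∈ A <;>
        cases a <;> cases b <;> simp_all
    · rintro ⟨h, hθ⟩
      refine ⟨decide (u ∈ A), !decide (v ∈ A), ⟨h, ?_⟩, ?_⟩ <;>
      rcases S.sign_pm u v h with hs | hs <;> by_cases hu : u ∈ A <;> by_cases hv : v ∈ A <;>
        simp_all

end SignedGraph

/-- Let `ψ` be a vector on the vertices of the Gremban expansion with no zero entries,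
and let `𝒰₁, 𝒰₂` be the sets where `ψ` is positive, resp. negative.  If `ψ` is symmetric
under the Gremban involution, then the cut-set `C(𝒰₁,𝒰₂)` is Gremban-symmetric and its
projection to `G` is a cut-set; if `ψ` is antisymmetric, then `C(𝒰₁,𝒰₂)` is
Gremban-symmetric and its projection is a frustration set of `G`. -/
theorem fiedler_cut_projection {V : Type*} (S : SignedGraph V)
    (ψ : V × Bool → ℝ) (hψ : ∀ x, ψ x ≠ 0) :
    ((∀ x, ψ (eta x) = ψ x) →
      Sym2.map eta '' cutEdges S.gremban {x | 0 < ψ x} {x | ψ x < 0} =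
          cutEdges S.gremban {x | 0 < ψ x} {x | ψ x < 0} ∧
      ∃ A : Set V,
        Sym2.map Prod.fst '' cutEdges S.gremban {x | 0 < ψ x} {x | ψ x < 0} =
          cutEdges S.G A Aᶜ) ∧
    ((∀ x, ψ (eta x) = -ψ x) →
      Sym2.map eta '' cutEdges S.gremban {x | 0 < ψ x} {x | ψ x < 0} =
          cutEdges S.gremban {x | 0 < ψ x} {x | ψ x < 0} ∧
      ∃ θ : V → ℤ, (∀ v, θ v = 1 ∨ θ v = -1) ∧
        Sym2.map Prod.fst '' cutEdges S.gremban {x | 0 < ψ x} {x | ψ x < 0} =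
          frustEdges S θ) := by
  have hneg : {x | ψ x < 0} = {x | 0 < ψ x}ᶜ := by
    ext x
    simp only [Set.mem_ofPred_eq, Set.mem_compl_iff, not_lt]
    exact (hψ x).le_iff_lt.symm
  set A : Set V := {u | 0 < ψ (u, true)}
  refine ⟨fun hsym => ⟨?_, A, ?_⟩, fun hanti => ⟨?_, fun u => if u ∈ A then 1 else -1, ?_, ?_⟩⟩
  · simp only [image_map_eta_cutEdges, Set.preimage_ofPred_eq, hsym]
  · have hpos : {x | 0 < ψ x} = Prod.fst ⁻¹' A := by
      ext ⟨u, a⟩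
      cases a
      · exact iff_of_eq (congrArg (0 < ·) (hsym (u, true)))
      · rfl
    rw [hneg, hpos, ← Set.preimage_compl, image_fst_cutEdges_preimage]
  · simp only [image_map_eta_cutEdges, Set.preimage_ofPred_eq, hanti, neg_pos, neg_lt_zero]
    exact cutEdges_comm _ _ _
  · intro u
    by_cases hu : u ∈ A <;> simp [hu]
  · have hpos : {x | 0 < ψ x} = {x | x.2 = true ↔ x.1 ∈ A} := by
      ext ⟨u, a⟩
      cases a
      · have hflip : 0 < ψ (u, false) ↔ (u, true) ∈ {x | ψ x < 0} := by
          show 0 < ψ (eta (u, true)) ↔ ψ (u, true) < 0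
          rw [hanti, neg_pos]
        simpa [hneg, A] using hflip
      · simp [A]
    rw [hneg, hpos, image_fst_cutEdges_switching]
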